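/- Let 0 < p, q < 1. Let π₁ : P(S²_{pqφ}) → P(D_p) be the unique unital algebra homomorphism with π₁(f₁) = x, π₁(f₋₁) = x*, π₁(f₀) = x x*, and let π₂ : P(S²_{pqφ}) → P(D_q) be the unique unital algebra homomorphism with π₂(f₁) = y, π₂(f₋₁) = y*, π₂(f₀) = 1. Then ker π₂ is the two-sided ideal of P(S²_{pqφ}) generated by 1 − f₀, and ker π₁ is the two-sided ideal generated by f₁f₋₁ − f₀. -/

import Mathlib

noncomputable section

/-- The free algebra ℂ⟨x, x*⟩ on two generators (generator 0 is `x`, generator 1 is `x*`). -/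
abbrev FreeDisc : Type := FreeAlgebra ℂ (Fin 2)

/-- The defining relation of the quantum disc: x* x = q x x* + (1 - q)·1. -/
def discRel (q : ℝ) : FreeDisc → FreeDisc → Prop := fun a b =>
  a = FreeAlgebra.ι ℂ (1 : Fin 2) * FreeAlgebra.ι ℂ (0 : Fin 2) ∧
  b = (q : ℂ) • (FreeAlgebra.ι ℂ (0 : Fin 2) * FreeAlgebra.ι ℂ (1 : Fin 2)) +
      ((1 : ℂ) - (q : ℂ)) • 1

/-- The polynomial quantum disc algebra P(D_q). -/
abbrev QDisc (q : ℝ) : Type := RingQuot (discRel q)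

/-- The generator x of P(D_q). -/
def xq (q : ℝ) : QDisc q := RingQuot.mkAlgHom ℂ (discRel q) (FreeAlgebra.ι ℂ 0)

/-- The generator x* of P(D_q). -/
def xsq (q : ℝ) : QDisc q := RingQuot.mkAlgHom ℂ (discRel q) (FreeAlgebra.ι ℂ 1)

/-- The free algebra ℂ⟨f₁, f₋₁, f₀⟩ (generator 0 is f₁, generator 1 is f₋₁,
generator 2 is f₀). -/
abbrev FreeSphere : Type := FreeAlgebra ℂ (Fin 3)

/-- f₁ in the free algebra. -/
def F1 : FreeSphere := FreeAlgebra.ι ℂ 0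
/-- f₋₁ in the free algebra. -/
def Fm1 : FreeSphere := FreeAlgebra.ι ℂ 1
/-- f₀ in the free algebra. -/
def F0 : FreeSphere := FreeAlgebra.ι ℂ 2

/-- The defining relations of P(S²_{pqφ}). -/
inductive sphereRel (p q : ℝ) : FreeSphere → FreeSphere → Prop
  | rel1 : sphereRel p q (Fm1 * F1)
      ((q : ℂ) • (F1 * Fm1) + ((p : ℂ) - (q : ℂ)) • F0 + ((1 : ℂ) - (p : ℂ)) • 1)
  | rel2 : sphereRel p q (F0 * F1) ((p : ℂ) • (F1 * F0) + ((1 : ℂ) - (p : ℂ)) • F1)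
  | rel3 : sphereRel p q (Fm1 * F0) ((p : ℂ) • (F0 * Fm1) + ((1 : ℂ) - (p : ℂ)) • Fm1)
  | rel4 : sphereRel p q ((1 - F0) * (F1 * Fm1 - F0)) 0

/-- The polynomial algebra P(S²_{pqφ}). -/
abbrev QSphere (p q : ℝ) : Type := RingQuot (sphereRel p q)

/-- The generator f₁ of P(S²_{pqφ}). -/
def f1 (p q : ℝ) : QSphere p q := RingQuot.mkAlgHom ℂ (sphereRel p q) F1
/-- The generator f₋₁ of P(S²_{pqφ}). -/
def fm1 (p q : ℝ) : QSphere p q := RingQuot.mkAlgHom ℂ (sphereRel p q) Fm1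
/-- The generator f₀ of P(S²_{pqφ}). -/
def f0 (p q : ℝ) : QSphere p q := RingQuot.mkAlgHom ℂ (sphereRel p q) F0

/-!
The ideal lies in the kernel since its generator is killed by `π`. Conversely, in the quotient
by the ideal the images of `f₁, f₋₁` satisfy the relation `f₋₁ f₁ = r f₁ f₋₁ + (1 - r)` of
`P(D_r)`, with `r = q` once `f₀ = 1` and `r = p` once `f₀ = f₁ f₋₁`. So the quotient map factors
as `τ ∘ π`, which puts the kernel of `π` inside the ideal.
-/

namespace TwoSidedIdeal

variable {R A B : Type*} [CommRing R] [Ring A] [Ring B] [Algebra R A] [Algebra R B]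

lemma mkₐ_eq_mkₐ_iff (I : TwoSidedIdeal A) {a b : A} :
    I.ringCon.mkₐ R a = I.ringCon.mkₐ R b ↔ a - b ∈ I :=
  (RingCon.eq _).trans (I.rel_iff a b)

lemma mkₐ_eq_mkₐ_of_sub_mem_span {a b : A} :
    (span {a - b}).ringCon.mkₐ R a = (span {a - b}).ringCon.mkₐ R b :=
  (mkₐ_eq_mkₐ_iff _).2 (subset_span rfl)

lemma ker_eq_span_singleton_of_comp_eq {π : A →ₐ[R] B} {g : A} (hg : π g = 0)
    (τ : B →ₐ[R] (span {g}).ringCon.Quotient)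
    (hτ : τ.comp π = (span {g}).ringCon.mkₐ R) :
    ker π = span {g} := by
  refine le_antisymm (fun a ha => ?_) (span_le.2 <| Set.singleton_subset_iff.2 <| (mem_ker π).2 hg)
  have hτa : (span {g}).ringCon.mkₐ R a = 0 := by
    rw [← hτ, AlgHom.comp_apply, (mem_ker π).1 ha, map_zero]
  simpa using (mkₐ_eq_mkₐ_iff (span {g}) (R := R)).1 (hτa.trans (map_zero _).symm)

end TwoSidedIdeal

namespace QDisc

variable {r : ℝ} {C : Type*} [Ring C] [Algebra ℂ C]

def lift {a b : C} (h : b * a = (r : ℂ) • (a * b) + (1 - (r : ℂ)) • 1) :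
    QDisc r →ₐ[ℂ] C :=
  RingQuot.liftAlgHom ℂ ⟨FreeAlgebra.lift ℂ ![a, b], by
    rintro _ _ ⟨rfl, rfl⟩
    simpa only [map_mul, map_add, map_smul, map_one, FreeAlgebra.lift_ι_apply,
      Matrix.cons_val_zero, Matrix.cons_val_one, Matrix.head_cons] using h⟩

variable {a b : C} (h : b * a = (r : ℂ) • (a * b) + (1 - (r : ℂ)) • 1)

@[simp]
lemma lift_xq : lift h (xq r) = a := by
  simp [lift, xq, RingQuot.liftAlgHom_mkAlgHom_apply]

@[simp]
lemma lift_xsq : lift h (xsq r) = b := by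
  simp [lift, xsq, RingQuot.liftAlgHom_mkAlgHom_apply]

end QDisc

namespace QSphere

variable {p q : ℝ} {C : Type*} [Ring C] [Algebra ℂ C]

lemma algHom_ext {φ ψ : QSphere p q →ₐ[ℂ] C} (h1 : φ (f1 p q) = ψ (f1 p q))
    (hm1 : φ (fm1 p q) = ψ (fm1 p q)) (h0 : φ (f0 p q) = ψ (f0 p q)) : φ = ψ := by
  refine RingQuot.ringQuot_ext' _ _ _ <| FreeAlgebra.hom_ext <| funext fun i => ?_
  fin_cases i
  exacts [h1, hm1, h0]

lemma fm1_mul_f1 : fm1 p q * f1 p q =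
    (q : ℂ) • (f1 p q * fm1 p q) + ((p : ℂ) - q) • f0 p q + (1 - (p : ℂ)) • 1 := by
  simpa only [map_mul, map_add, map_smul, map_one, f1, fm1, f0] using
    RingQuot.mkAlgHom_rel ℂ (sphereRel.rel1 (p := p) (q := q))

open TwoSidedIdeal

lemma ker_eq_span_one_sub_f0 (π : QSphere p q →ₐ[ℂ] QDisc q) (h1 : π (f1 p q) = xq q)
    (hm1 : π (fm1 p q) = xsq q) (h0 : π (f0 p q) = 1) :
    ker π = span {1 - f0 p q} := by
  set ρ := (span {1 - f0 p q}).ringCon.mkₐ ℂ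
  have hf0 : ρ (f0 p q) = 1 := (mkₐ_eq_mkₐ_of_sub_mem_span).symm.trans (map_one ρ)
  have hrel : ρ (fm1 p q) * ρ (f1 p q) =
      (q : ℂ) • (ρ (f1 p q) * ρ (fm1 p q)) + (1 - (q : ℂ)) • 1 := by
    rw [← map_mul, fm1_mul_f1]
    simp only [map_add, map_smul, map_mul, map_one, hf0]
    module
  refine ker_eq_span_singleton_of_comp_eq (by simp [h0]) (QDisc.lift hrel)
    (algHom_ext ?_ ?_ ?_) <;>
    simp only [AlgHom.comp_apply, h1, hm1, h0, map_one, QDisc.lift_xq, QDisc.lift_xsq]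
  exacts [rfl, rfl, hf0.symm]

lemma ker_eq_span_f1_mul_fm1_sub_f0 (π : QSphere p q →ₐ[ℂ] QDisc p) (h1 : π (f1 p q) = xq p)
    (hm1 : π (fm1 p q) = xsq p) (h0 : π (f0 p q) = xq p * xsq p) :
    ker π = span {f1 p q * fm1 p q - f0 p q} := by
  set ρ := (span {f1 p q * fm1 p q - f0 p q}).ringCon.mkₐ ℂ
  have hf0 : ρ (f0 p q) = ρ (f1 p q) * ρ (fm1 p q) :=
    (mkₐ_eq_mkₐ_of_sub_mem_span).symm.trans (map_mul ρ _ _)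
  have hrel : ρ (fm1 p q) * ρ (f1 p q) =
      (p : ℂ) • (ρ (f1 p q) * ρ (fm1 p q)) + (1 - (p : ℂ)) • 1 := by
    rw [← map_mul, fm1_mul_f1]
    simp only [map_add, map_smul, map_mul, map_one, hf0]
    module
  refine ker_eq_span_singleton_of_comp_eq (by simp [h0, h1, hm1]) (QDisc.lift hrel)
    (algHom_ext ?_ ?_ ?_) <;>
    simp only [AlgHom.comp_apply, h1, hm1, h0, map_mul, QDisc.lift_xq, QDisc.lift_xsq]
  exacts [rfl, rfl, hf0.symm]

end QSphere

theorem sphere_projection_kernels_general (p q : ℝ)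
    (π₁ : QSphere p q →ₐ[ℂ] QDisc p)
    (hπ₁f1 : π₁ (f1 p q) = xq p)
    (hπ₁fm1 : π₁ (fm1 p q) = xsq p)
    (hπ₁f0 : π₁ (f0 p q) = xq p * xsq p)
    (π₂ : QSphere p q →ₐ[ℂ] QDisc q)
    (hπ₂f1 : π₂ (f1 p q) = xq q)
    (hπ₂fm1 : π₂ (fm1 p q) = xsq q)
    (hπ₂f0 : π₂ (f0 p q) = 1) :
    {a : QSphere p q | π₂ a = 0} =
      (TwoSidedIdeal.span {(1 : QSphere p q) - f0 p q} : Set (QSphere p q)) ∧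
    {a : QSphere p q | π₁ a = 0} =
      (TwoSidedIdeal.span {f1 p q * fm1 p q - f0 p q} : Set (QSphere p q)) := by
  rw [← QSphere.ker_eq_span_one_sub_f0 π₂ hπ₂f1 hπ₂fm1 hπ₂f0,
    ← QSphere.ker_eq_span_f1_mul_fm1_sub_f0 π₁ hπ₁f1 hπ₁fm1 hπ₁f0]
  exact ⟨Set.ext fun _ => (TwoSidedIdeal.mem_ker π₂).symm,
    Set.ext fun _ => (TwoSidedIdeal.mem_ker π₁).symm⟩

/-- Let π₁ : P(S²_{pqφ}) → P(D_p) be the homomorphism with π₁(f₁) = x,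
π₁(f₋₁) = x*, π₁(f₀) = x x*, and π₂ : P(S²_{pqφ}) → P(D_q) the homomorphism with
π₂(f₁) = y, π₂(f₋₁) = y*, π₂(f₀) = 1.  Then ker π₂ is the two-sided ideal generated by
1 - f₀ and ker π₁ is the two-sided ideal generated by f₁ f₋₁ - f₀. -/
theorem sphere_projection_kernels (p q : ℝ) (hp0 : 0 < p) (hp1 : p < 1)
    (hq0 : 0 < q) (hq1 : q < 1)
    (π₁ : QSphere p q →ₐ[ℂ] QDisc p)
    (hπ₁f1 : π₁ (f1 p q) = xq p)
    (hπ₁fm1 : π₁ (fm1 p q) = xsq p)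
    (hπ₁f0 : π₁ (f0 p q) = xq p * xsq p)
    (π₂ : QSphere p q →ₐ[ℂ] QDisc q)
    (hπ₂f1 : π₂ (f1 p q) = xq q)
    (hπ₂fm1 : π₂ (fm1 p q) = xsq q)
    (hπ₂f0 : π₂ (f0 p q) = 1) :
    {a : QSphere p q | π₂ a = 0} =
      (TwoSidedIdeal.span {(1 : QSphere p q) - f0 p q} : Set (QSphere p q)) ∧
    {a : QSphere p q | π₁ a = 0} =
      (TwoSidedIdeal.span {f1 p q * fm1 p q - f0 p q} : Set (QSphere p q)) :=
  sphere_projection_kernels_general p q π₁ hπ₁f1 hπ₁fm1 hπ₁f0 π₂ hπ₂f1 hπ₂fm1 hπ₂f0
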